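/- arXiv:1402.1337 — 2 statements merged into one kernel-verified Lean document; each statement's English description precedes it below -/
import Mathlib

section
/- Let m > n be relatively prime positive integers with m/n = [a_1,...,a_d] as a continued fraction with a_1 ≥ 2 (so m ≥ 2n). Then the three continuant values A = K(a_d,...,a_2,a_1-1,1,a_1-1,a_2,...,a_d), B = K(a_d,...,a_2,2a_1,a_2,...,a_d), C = K(a_d,...,a_2,a_1,a_1,a_2,...,a_d) satisfy A = m² - n², B = 2mn, and C = m² + n²; in particular A² + B² = C². -/
def contK : List ℕ → ℕ
  | [] => 1
  | [a] => a
  | a :: b :: l => a * contK (b :: l) + contK l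

def cf : List ℕ → ℚ
  | [] => 0
  | [a] => a
  | a :: b :: l => a + 1 / cf (b :: l)

/-!
Unfolding the continuant from the middle, `K(t.reverse ++ Y) = K(t) K(Y) + K'(t) K'(Y)`, where
`K'` drops the first entry. Write `n = K(t)` and `m = K(a₁ :: t) = a₁ n + K'(t)`; for each of
the three middles `X`, both `K(X ++ t)` and `K'(X ++ t)` are linear in `m` and `n`, so the three
values are quadratic forms in `m` and `n`. The continued fraction only identifies `m` and `n`:
`cf (a₁ :: t) = K(a₁ :: t) / K(t)`, and this fraction is reduced, like `m / n`.
-/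

/-- The continuant of the tail, except that the empty list gets `0` rather than `contK [] = 1`,
so that `contK_cons` holds without a case split. -/
def contKTail : List ℕ → ℕ
  | [] => 0
  | _ :: l => contK l

lemma contK_cons (a : ℕ) (l : List ℕ) : contK (a :: l) = a * contK l + contKTail l := by
  cases l <;> simp [contK, contKTail]

lemma contK_reverse_append (t X : List ℕ) :
    contK (t.reverse ++ X) = contK t * contK X + contKTail t * contKTail X := by
  induction t generalizing X with
  | nil => simp [contK, contKTail]
  | cons a t ih =>
    rw [List.reverse_cons, List.append_assoc, List.singleton_append, ih, contK_cons, contK_cons]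
    simp only [contKTail]
    ring

lemma contK_pos {l : List ℕ} (hl : ∀ x ∈ l, 0 < x) : 0 < contK l := by
  induction l with
  | nil => exact one_pos
  | cons a l ih =>
    rw [contK_cons]
    have := ih fun x hx => hl x (List.mem_cons_of_mem a hx)
    have := hl a List.mem_cons_self
    positivity

lemma coprime_contK_contKTail (l : List ℕ) : Nat.Coprime (contK l) (contKTail l) := by
  induction l with
  | nil => simp [contK, contKTail]
  | cons a l ih =>
    rw [contK_cons, contKTail, Nat.coprime_comm, Nat.coprime_mul_right_add_right]
    exact ih

lemma cf_cons_eq_div (a : ℕ) {l : List ℕ} (hl : ∀ x ∈ l, 0 < x) :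
    cf (a :: l) = contK (a :: l) / contK l := by
  induction l generalizing a with
  | nil => simp [cf, contK]
  | cons b l ih =>
    have hpos : (0 : ℚ) < contK (b :: l) := by exact_mod_cast contK_pos hl
    rw [cf, ih b fun x hx => hl x (List.mem_cons_of_mem b hx), contK]
    push_cast
    field_simp

lemma contK_eq_of_cf_eq {a m n : ℕ} {t : List ℕ} (ht : ∀ x ∈ t, 0 < x) (hn : 0 < n)
    (hcop : Nat.Coprime m n) (hcf : cf (a :: t) = m / n) :
    contK (a :: t) = m ∧ contK t = n := by
  rw [cf_cons_eq_div a ht] at hcf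
  have hcop' : Nat.Coprime (contK (a :: t)) (contK t) := coprime_contK_contKTail (a :: t)
  have := Rat.div_int_inj (a := contK (a :: t)) (b := contK t) (c := m) (d := n)
    (by exact_mod_cast contK_pos ht) (by exact_mod_cast hn) (by simpa using hcop')
    (by simpa using hcop) (by simpa only [Int.cast_natCast] using hcf)
  exact_mod_cast this

lemma contK_palindrome_pred_one_pred {a : ℕ} (ha : 1 ≤ a) (t : List ℕ) :
    contK (t.reverse ++ [a - 1, 1, a - 1] ++ t) + contK t ^ 2 = contK (a :: t) ^ 2 := by
  obtain ⟨b, rfl⟩ : ∃ b, a = b + 1 := ⟨a - 1, by omega⟩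
  rw [List.append_assoc, contK_reverse_append]
  simp only [List.cons_append, List.nil_append, contK_cons, contKTail, Nat.add_sub_cancel]
  ring

lemma contK_palindrome_two_mul (a : ℕ) (t : List ℕ) :
    contK (t.reverse ++ [2 * a] ++ t) = 2 * contK (a :: t) * contK t := by
  rw [List.append_assoc, contK_reverse_append]
  simp only [List.cons_append, List.nil_append, contK_cons, contKTail]
  ring

lemma contK_palindrome_double (a : ℕ) (t : List ℕ) :
    contK (t.reverse ++ [a, a] ++ t) = contK (a :: t) ^ 2 + contK t ^ 2 := by
  rw [List.append_assoc, contK_reverse_append]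
  simp only [List.cons_append, List.nil_append, contK_cons, contKTail]
  ring

theorem pythagorean_triple_continuants_general (m n a₁ : ℕ) (t : List ℕ)
    (hn : 0 < n) (hcop : Nat.Coprime m n)
    (ha₁ : 2 ≤ a₁) (ht : ∀ x ∈ t, 0 < x)
    (hcf : cf (a₁ :: t) = (m : ℚ) / (n : ℚ)) :
    contK (t.reverse ++ [a₁ - 1, 1, a₁ - 1] ++ t) = m ^ 2 - n ^ 2 ∧
    contK (t.reverse ++ [2 * a₁] ++ t) = 2 * m * n ∧
    contK (t.reverse ++ [a₁, a₁] ++ t) = m ^ 2 + n ^ 2 ∧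
    (contK (t.reverse ++ [a₁ - 1, 1, a₁ - 1] ++ t)) ^ 2 +
      (contK (t.reverse ++ [2 * a₁] ++ t)) ^ 2 =
      (contK (t.reverse ++ [a₁, a₁] ++ t)) ^ 2 := by
  obtain ⟨rfl, rfl⟩ := contK_eq_of_cf_eq ht hn hcop hcf
  have hA := contK_palindrome_pred_one_pred (by omega : 1 ≤ a₁) t
  refine ⟨by omega, contK_palindrome_two_mul a₁ t, contK_palindrome_double a₁ t, ?_⟩
  rw [contK_palindrome_two_mul, contK_palindrome_double, mul_pow, mul_pow, ← hA]
  ring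

theorem pythagorean_triple_continuants (m n a₁ : ℕ) (t : List ℕ)
    (hn : 0 < n) (hmn : n < m) (hcop : Nat.Coprime m n)
    (ha₁ : 2 ≤ a₁) (ht : ∀ x ∈ t, 0 < x)
    (hcf : cf (a₁ :: t) = (m : ℚ) / (n : ℚ)) :
    contK (t.reverse ++ [a₁ - 1, 1, a₁ - 1] ++ t) = m ^ 2 - n ^ 2 ∧
    contK (t.reverse ++ [2 * a₁] ++ t) = 2 * m * n ∧
    contK (t.reverse ++ [a₁, a₁] ++ t) = m ^ 2 + n ^ 2 ∧
    (contK (t.reverse ++ [a₁ - 1, 1, a₁ - 1] ++ t)) ^ 2 +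
      (contK (t.reverse ++ [2 * a₁] ++ t)) ^ 2 =
      (contK (t.reverse ++ [a₁, a₁] ++ t)) ^ 2 :=
  pythagorean_triple_continuants_general m n a₁ t hn hcop ha₁ ht hcf
end

section
/- For any sequence of positive integers a_1,...,a_d, K(a_d,...,a_2,2a_1,a_2,...,a_d) = 2·K(a_1,...,a_d)·K(a_2,...,a_d). -/
/-- continuant of the list with last element dropped, with the convention
that it is 0 for the empty list (the "length -1" continuant). -/
def kpre : List ℕ → ℕ
  | [] => 0
  | a :: l => contK ((a :: l).dropLast)

lemma kpre_cons (a b : ℕ) (xs : List ℕ) :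
    kpre (a :: b :: xs) = a * kpre (b :: xs) + kpre xs := by
  cases xs with
  | nil => simp [kpre, contK]
  | cons c xs' => simp [kpre, contK]

lemma contK_append (y : ℕ) (ys : List ℕ) :
    ∀ l, contK (l ++ y :: ys) = contK l * contK (y :: ys) + kpre l * contK ys
  | [] => by simp [contK, kpre]
  | [a] => by simp [contK, kpre]
  | a :: b :: xs => by
    have h1 := contK_append y ys (b :: xs)
    have h2 := contK_append y ys xs
    show contK (a :: b :: (xs ++ y :: ys)) = _
    rw [show contK (a :: b :: (xs ++ y :: ys))
        = a * contK (b :: (xs ++ y :: ys)) + contK (xs ++ y :: ys) from rfl]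
    rw [show (b :: (xs ++ y :: ys)) = (b :: xs) ++ y :: ys from rfl] at *
    rw [h1, h2, kpre_cons,
      show contK (a :: b :: xs) = a * contK (b :: xs) + contK xs from rfl]
    ring

lemma contK_reverse : ∀ l : List ℕ, contK l.reverse = contK l
  | [] => rfl
  | [a] => rfl
  | a :: b :: l' => by
    have h1 : contK (b :: l').reverse = contK (b :: l') := contK_reverse (b :: l')
    have h2 : contK l'.reverse = contK l' := contK_reverse l'
    have : (a :: b :: l').reverse = (b :: l').reverse ++ [a] := by simp
    rw [this, contK_append a [] ((b :: l').reverse)]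
    have hk : kpre ((b :: l').reverse) = contK l' := by
      have : (b :: l').reverse = l'.reverse ++ [b] := by simp
      rw [this]
      cases l' with
      | nil => simp [kpre, contK]
      | cons c cs =>
        have hne : (c :: cs).reverse ++ [b] ≠ [] := by simp
        obtain ⟨z, zs, hz⟩ := List.exists_cons_of_ne_nil hne
        rw [hz, kpre, ← hz, List.dropLast_concat, h2]
    rw [hk, h1]
    show contK (b :: l') * a + contK l' * 1 = a * contK (b :: l') + contK l'
    ring

theorem continuant_palindrome_double (a₁ : ℕ) (ha₁ : 0 < a₁) (t : List ℕ)
    (ht : ∀ x ∈ t, 0 < x) :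
    contK (t.reverse ++ 2 * a₁ :: t) = 2 * contK (a₁ :: t) * contK t := by
  cases t with
  | nil => simp [contK]
  | cons y ys =>
    rw [contK_append (2 * a₁) (y :: ys) ((y :: ys).reverse), contK_reverse]
    have hk : kpre ((y :: ys).reverse) = contK ys := by
      have h : (y :: ys).reverse = ys.reverse ++ [y] := by simp
      rw [h]
      cases ys with
      | nil => simp [kpre, contK]
      | cons c cs =>
        have hne : (c :: cs).reverse ++ [y] ≠ [] := by simp
        obtain ⟨z, zs, hz⟩ := List.exists_cons_of_ne_nil hne
        rw [hz, kpre, ← hz, List.dropLast_concat, contK_reverse]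
    rw [hk,
      show contK (2 * a₁ :: y :: ys) = 2 * a₁ * contK (y :: ys) + contK ys from rfl,
      show contK (a₁ :: y :: ys) = a₁ * contK (y :: ys) + contK ys from rfl]
    ring
end
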